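/- Behaviour of the squared Gauss map under the translation induced by the order-6 screw symmetry: let τ ∈ ℂ with Im τ > 0. Then for all z ∈ ℂ one has G²(z + 1/3) = exp(2πi/3) · G²(z); i.e., translating by the 3-division point 1/3 multiplies G² by the primitive cube root of unity e^{2πi/3}. -/
import Mathlib

open Complex

/-- The Jacobi theta function θ₁(z;τ), defined via Mathlib's `jacobiTheta₂` by
θ₁(z;τ) = −i·exp(iπτ/4 + iπz)·jacobiTheta₂(z + (1+τ)/2, τ). -/
noncomputable def theta1 (z τ : ℂ) : ℂ :=
  -I * Complex.exp (I * (Real.pi : ℂ) * τ / 4 + I * (Real.pi : ℂ) * z) *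
    jacobiTheta₂ (z + (1 + τ) / 2) τ

/-- The squared Gauss map of the gyrating H'-T surface:
G²(z) = −exp(iπτ/3)·exp(2πi z)·θ₁(3z; 3τ) / θ₁(3z − τ; 3τ). -/
noncomputable def Gsq (τ z : ℂ) : ℂ :=
  -Complex.exp (I * (Real.pi : ℂ) * τ / 3) * Complex.exp (2 * (Real.pi : ℂ) * I * z) *
    theta1 (3 * z) (3 * τ) / theta1 (3 * z - τ) (3 * τ)

lemma theta1_add_one (w τ : ℂ) : theta1 (w + 1) τ = -theta1 w τ := by
  unfold theta1
  have h1 : w + 1 + (1 + τ) / 2 = (w + (1 + τ) / 2) + 1 := by ring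
  rw [h1, jacobiTheta₂_add_left]
  have h2 : I * (Real.pi : ℂ) * τ / 4 + I * (Real.pi : ℂ) * (w + 1)
      = (I * (Real.pi : ℂ) * τ / 4 + I * (Real.pi : ℂ) * w) + (Real.pi : ℂ) * I := by ring
  rw [h2, Complex.exp_add, Complex.exp_pi_mul_I]
  ring

/-- Behaviour of G² under the translation induced by the order-6 screw symmetry:
G²(z + 1/3) = e^{2πi/3}·G²(z). -/
theorem Gsq_screw_translation (τ : ℂ) (hτ : 0 < τ.im) (z : ℂ) :
    Gsq τ (z + 1 / 3) = Complex.exp (2 * (Real.pi : ℂ) * I / 3) * Gsq τ z := by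
  unfold Gsq
  have h1 : 3 * (z + 1 / 3) = 3 * z + 1 := by ring
  have h2 : 3 * z + 1 - τ = (3 * z - τ) + 1 := by ring
  rw [h1, h2, theta1_add_one, theta1_add_one]
  have h3 : 2 * (Real.pi : ℂ) * I * (z + 1 / 3)
      = 2 * (Real.pi : ℂ) * I / 3 + 2 * (Real.pi : ℂ) * I * z := by ring
  rw [h3, Complex.exp_add]
  rw [mul_div_assoc, mul_div_assoc, neg_div_neg_eq]
  ring
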